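/- arXiv:2110.04805 — 2 statements merged into one kernel-verified Lean document; each statement's English description precedes it below -/
import Mathlib

section
/- For all non-negative integers n and l, S(n,l) = ∑_{k∈ℤ} (-1)^k · C(2n, n+k) · C(2l, l+k) (von Szily's identity), where the sum ranges over all integers k with |k| ≤ min(n,l). -/
/-!
Let `V(m, n)` be `(-1)^n` times the coefficient of `x^(m+n)` in `(x+1)^(2m) (x-1)^(2n)`.
Multiplying that polynomial by `4x = (x+1)^2 - (x-1)^2` shows that `V` satisfies the
recurrence `S(m+1, n) + S(m, n+1) = 4 S(m, n)` of the super Catalan numbers, and both equal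
`C(2m, m)` at `n = 0`. Expanding the product by the Cauchy formula and reindexing by
`k ↦ (m + k, n - k)` turns `V(m, n)` into the alternating sum.
-/

/-- The super Catalan number, an integer (the division is exact). -/
def superCatalan (n l : ℕ) : ℕ :=
  ((2 * n).factorial * (2 * l).factorial) /
    (n.factorial * l.factorial * (n + l).factorial)

open Finset Polynomial Nat

noncomputable def szily (m n : ℕ) : ℤ :=
  (-1) ^ n * ((X + 1) ^ (2 * m) * (X - 1) ^ (2 * n) : ℤ[X]).coeff (m + n)

lemma szily_succ_left_add_succ_right (m n : ℕ) :
    szily (m + 1) n + szily m (n + 1) = 4 * szily m n := by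
  have h : ((X + 1) ^ (2 * (m + 1)) * (X - 1) ^ (2 * n) -
      (X + 1) ^ (2 * m) * (X - 1) ^ (2 * (n + 1)) : ℤ[X]) =
      X * (4 * ((X + 1) ^ (2 * m) * (X - 1) ^ (2 * n))) := by ring
  have hcoeff := congrArg (coeff · (m + n + 1)) h
  simp only [coeff_sub, coeff_X_mul, coeff_ofNat_mul] at hcoeff
  rw [szily, szily, szily, add_right_comm, ← add_assoc, pow_succ]
  linear_combination (-1) ^ n * hcoeff

lemma szily_zero_right (m : ℕ) : szily m 0 = (2 * m).choose m := by
  simp [szily, coeff_X_add_one_pow]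

noncomputable def superCatalanRat (m n : ℕ) : ℚ :=
  (2 * m)! * (2 * n)! / (m ! * n ! * (m + n)!)

lemma superCatalanRat_succ_left_add_succ_right (m n : ℕ) :
    superCatalanRat (m + 1) n + superCatalanRat m (n + 1) = 4 * superCatalanRat m n := by
  simp only [superCatalanRat, Nat.mul_succ, show m + 1 + n = m + n + 1 by ring,
    ← add_assoc, Nat.factorial_succ]
  push_cast
  field_simp
  ring

lemma superCatalanRat_zero_right (m : ℕ) : superCatalanRat m 0 = (2 * m).choose m := by
  rw [superCatalanRat, Nat.cast_choose ℚ (by omega : m ≤ 2 * m), two_mul, Nat.add_sub_cancel]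
  simp

lemma szily_eq_superCatalanRat (m n : ℕ) : (szily m n : ℚ) = superCatalanRat m n := by
  induction n generalizing m with
  | zero => simp [szily_zero_right, superCatalanRat_zero_right]
  | succ n ih =>
    have hS := superCatalanRat_succ_left_add_succ_right m n
    have hV : (szily (m + 1) n : ℚ) + szily m (n + 1) = 4 * szily m n := by
      exact_mod_cast szily_succ_left_add_succ_right m n
    rw [← ih, ← ih] at hS
    linarith

lemma superCatalan_eq_szily (m n : ℕ) : (superCatalan m n : ℤ) = szily m n := by
  have h := szily_eq_superCatalanRat m n
  rw [superCatalanRat, eq_div_iff (by positivity)] at h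
  have hdvd : m ! * n ! * (m + n)! ∣ (2 * m)! * (2 * n)! := by
    rw [← Int.natCast_dvd_natCast]
    exact Dvd.intro_left _ (by exact_mod_cast h)
  have hcast : (superCatalan m n : ℚ) = superCatalanRat m n := by
    rw [superCatalan, Nat.cast_div hdvd (by positivity), superCatalanRat]
    norm_cast
  exact_mod_cast hcast.trans (szily_eq_superCatalanRat m n).symm

lemma szily_eq_sum (m n : ℕ) :
    szily m n = ∑ k ∈ Icc (-(min m n : ℤ)) (min m n),
      (-1 : ℤ) ^ k.natAbs * ((2 * m).choose (m + k).toNat : ℤ) *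
        ((2 * n).choose (n + k).toNat : ℤ) := by
  have hXsub : (X - 1 : ℤ[X]) = X + C (-1) := by simp [sub_eq_add_neg]
  rw [szily, hXsub, coeff_mul, mul_sum]
  simp only [coeff_X_add_one_pow, coeff_X_add_C_pow]
  have hterm : ∀ k ∈ Icc (-(min m n : ℤ)) (min m n),
      (-1 : ℤ) ^ k.natAbs * ((2 * m).choose (m + k).toNat : ℤ) *
          ((2 * n).choose (n + k).toNat : ℤ) =
        (-1) ^ n * ((2 * m).choose (m + k).toNat *
          ((-1) ^ (2 * n - (n - k).toNat) * (2 * n).choose (n - k).toNat)) := by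
    intro k hk
    simp only [mem_Icc] at hk
    rw [Nat.choose_symm_of_eq_add (show 2 * n = (n + k).toNat + (n - k).toNat by omega),
      neg_one_pow_congr (R := ℤ) (m := k.natAbs) (n := n + (2 * n - (n - k).toNat))
        (by simp only [Nat.even_iff]; omega), pow_add]
    ring
  symm
  refine sum_bij_ne_zero (fun k _ _ ↦ ((m + k).toNat, (n - k).toNat)) ?_ ?_ ?_
    fun k hk _ ↦ hterm k hk
  · intro k hk _
    simp only [mem_Icc] at hk
    simp only [HasAntidiagonal.mem_antidiagonal]
    omega
  · intro k _ _ k' _ _ h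
    simp only [Prod.mk.injEq] at h
    omega
  · rintro ⟨i, j⟩ hij hne
    simp only [HasAntidiagonal.mem_antidiagonal] at hij
    dsimp only at hne
    have hi : i ≤ 2 * m := le_of_not_gt fun hc ↦ hne (by simp [Nat.choose_eq_zero_of_lt hc])
    have hj : j ≤ 2 * n := le_of_not_gt fun hc ↦ hne (by simp [Nat.choose_eq_zero_of_lt hc])
    have hk : (i : ℤ) - m ∈ Icc (-(min m n : ℤ)) (min m n) := by
      simp only [mem_Icc]; omega
    have hi' : (m + ((i : ℤ) - m)).toNat = i := by omega
    have hj' : (n - ((i : ℤ) - m)).toNat = j := by omega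
    exact ⟨_, hk, by rwa [hterm _ hk, hi', hj'], by rw [hi', hj']⟩

/-- Von Szily's identity:
S(n,l) = ∑_{|k| ≤ min n l} (-1)^k C(2n, n+k) C(2l, l+k). -/
theorem vonSzily (n l : ℕ) :
    (superCatalan n l : ℤ) =
      ∑ k ∈ Finset.Icc (-(min n l : ℤ)) (min n l),
        (-1 : ℤ) ^ k.natAbs * ((2 * n).choose (n + k).toNat : ℤ) *
          ((2 * l).choose (l + k).toNat : ℤ) :=
  (superCatalan_eq_szily n l).trans (szily_eq_sum n l)
end

section
/- For all non-negative integers n and t with t ≤ n: ∑_{k=t}^{2n-t} (-1)^k · C(2n-2t, k-t) · Cat(k) · Cat(2n-k) = (-1)^t · Cat(n) · C(2t,t) · C(2n-2t, n-t) / C(2n+1-t, t). -/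
/-!
Write `n = t + m`. After removing the sign `(-1)^t` the sum `S(m, t)` runs over
`j = k - t ∈ [0, 2m]`. Zeilberger's algorithm produces the first-order recurrence
`(2t+1)(t+2m+3) S(m+1, t) = 2(2m+1)(2m+3) S(m, t+1)`, proved by telescoping with a polynomial
certificate, using only the ratios of consecutive Catalan numbers and binomial coefficients.
The closed form satisfies the same recurrence, and both equal `Cat(t)^2` at `m = 0`, so induction
on `m` (for all `t` at once) concludes.
-/

open Finset

theorem cast_catalan_succ (k : ℕ) :
    (catalan (k + 1) : ℚ) = 2 * (2 * k + 1) * catalan k / (k + 2) := by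
  have h₁ : ((k + 1 + 1 : ℕ) : ℚ) * catalan (k + 1) = (k + 1).centralBinom := by
    exact_mod_cast succ_mul_catalan_eq_centralBinom (k + 1)
  have h₂ : ((k + 1 : ℕ) : ℚ) * catalan k = k.centralBinom := by
    exact_mod_cast succ_mul_catalan_eq_centralBinom k
  have h₃ : ((k + 1 : ℕ) : ℚ) * (k + 1).centralBinom = 2 * (2 * k + 1) * k.centralBinom := by
    exact_mod_cast Nat.succ_mul_centralBinom_succ k
  push_cast at h₁ h₂ h₃
  rw [eq_div_iff (by positivity)]
  apply mul_left_cancel₀ (show (k : ℚ) + 1 ≠ 0 by positivity)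
  linear_combination (k + 1 : ℚ) * h₁ + h₃ - 2 * (2 * k + 1 : ℚ) * h₂

theorem cast_choose_two_mul_succ (n : ℕ) :
    ((2 * n + 2).choose (n + 1) : ℚ) = 2 * (2 * n + 1) * (2 * n).choose n / (n + 1) := by
  have h := Nat.succ_mul_centralBinom_succ n
  simp only [Nat.centralBinom_eq_two_mul_choose, Nat.mul_succ] at h
  rw [eq_div_iff (by positivity)]
  exact_mod_cast (by linarith [h] :
    (2 * n + 2).choose (n + 1) * (n + 1) = 2 * (2 * n + 1) * (2 * n).choose n)

theorem cast_choose_succ_right_mul (n k : ℕ) :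
    (n.choose (k + 1) : ℚ) * (k + 1) = n.choose k * (n - k) := by
  rcases le_or_gt k n with hk | hk
  · rw [← Nat.cast_sub hk]
    exact_mod_cast Nat.choose_succ_right_eq n k
  · simp [Nat.choose_eq_zero_of_lt hk, Nat.choose_eq_zero_of_lt (hk.trans (lt_add_one k))]

theorem cast_choose_mul_succ (n k : ℕ) :
    (n.choose k : ℚ) * (n + 1) = (n + 1).choose k * (n + 1 - k) := by
  rcases le_or_gt k (n + 1) with hk | hk
  · rw [show (n : ℚ) + 1 - k = ((n + 1 - k : ℕ) : ℚ) by push_cast [Nat.cast_sub hk]; ring]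
    exact_mod_cast Nat.choose_mul_succ_eq n k
  · simp [Nat.choose_eq_zero_of_lt hk, Nat.choose_eq_zero_of_lt ((lt_add_one n).trans hk)]

/-- The summand of the theorem without its sign `(-1)^t`, in the variables `c = 2n - 2t` and
`j = k - t`. -/
def altCatalanTerm (c t j : ℕ) : ℚ :=
  (-1) ^ j * c.choose j * catalan (t + j) * catalan (t + (c - j))

def altCatalanSum (c t : ℕ) : ℚ :=
  ∑ j ∈ range (c + 1), altCatalanTerm c t j

def altCatalanClosedForm (m t : ℕ) : ℚ :=
  catalan (t + m) * (2 * t).choose t * (2 * m).choose m / (t + 2 * m + 1).choose t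

/-- The certificate produced by Zeilberger's algorithm for `altCatalanSum_recurrence`. -/
def zeilbergerCert (t m j : ℕ) : ℚ :=
  j * (2 * t ^ 2 + (4 * m + 7) * t - 8 * m ^ 2 - 16 * m - 7 + (8 * m + 9) * j - 2 * j ^ 2)

theorem altCatalanTerm_eq_zero {c j : ℕ} (t : ℕ) (h : c < j) : altCatalanTerm c t j = 0 := by
  simp [altCatalanTerm, Nat.choose_eq_zero_of_lt h]

theorem altCatalanSum_eq_sum_range {c N : ℕ} (t : ℕ) (h : c < N) :
    altCatalanSum c t = ∑ j ∈ range N, altCatalanTerm c t j :=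
  sum_subset (range_subset_range.2 h) fun _ _ hjc =>
    altCatalanTerm_eq_zero t (by simpa using hjc)

theorem altCatalanTerm_zeilberger_of_add_eq {t m j k : ℕ} (h : j + k = 2 * m + 1) :
    2 * (m + 1) * (2 * (2 * m + 1) * (2 * m + 3) * altCatalanTerm (2 * m) (t + 1) j
        - (2 * t + 1) * (t + 2 * m + 3) * altCatalanTerm (2 * m + 2) t j)
      = zeilbergerCert t m (j + 1) * altCatalanTerm (2 * m + 2) t (j + 1)
        - zeilbergerCert t m j * altCatalanTerm (2 * m + 2) t j := by
  have hF : altCatalanTerm (2 * m + 2) t j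
      = (-1) ^ j * (2 * m + 2).choose j * catalan (t + j) * catalan (t + k + 1) := by
    rw [altCatalanTerm, show 2 * m + 2 - j = k + 1 by omega, add_assoc]
  have hF' : altCatalanTerm (2 * m + 2) t (j + 1)
      = -((-1) ^ j * (2 * m + 2).choose (j + 1) * catalan (t + j + 1) * catalan (t + k)) := by
    rw [altCatalanTerm, show 2 * m + 2 - (j + 1) = k by omega, pow_succ, add_assoc]
    ring
  have hG : altCatalanTerm (2 * m) (t + 1) j
      = (-1) ^ j * (2 * m).choose j * catalan (t + j + 1) * catalan (t + k) := by
    rcases k with _ | k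
    · simp [altCatalanTerm, Nat.choose_eq_zero_of_lt (show 2 * m < j by omega)]
    · rw [altCatalanTerm, show 2 * m - j = k by omega, add_right_comm, add_assoc t 1 k,
        add_comm 1 k]
  have hsucc : ((2 * m + 2).choose (j + 1) : ℚ)
      = (2 * m + 2).choose j * (2 * m + 2 - j) / (j + 1) := by
    rw [eq_div_iff (by positivity)]
    exact_mod_cast cast_choose_succ_right_mul (2 * m + 2) j
  have hpred : ((2 * m).choose j : ℚ)
      = (2 * m + 2).choose j * (2 * m + 2 - j) * (2 * m + 1 - j) / ((2 * m + 1) * (2 * m + 2)) := by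
    rw [eq_div_iff (by positivity)]
    have h₁ := cast_choose_mul_succ (2 * m) j
    have h₂ := cast_choose_mul_succ (2 * m + 1) j
    push_cast at h₁ h₂
    linear_combination (2 * m + 2 : ℚ) * h₁ + (2 * m + 1 - j : ℚ) * h₂
  have hk : (k : ℚ) = 2 * m + 1 - j := by
    rw [eq_sub_iff_add_eq, add_comm]; exact_mod_cast h
  rw [hF, hF', hG, hsucc, hpred, cast_catalan_succ, cast_catalan_succ, zeilbergerCert,
    zeilbergerCert]
  push_cast
  rw [hk]
  have : (t : ℚ) + (2 * m + 1 - j) + 2 ≠ 0 := by rw [← hk]; positivity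
  field_simp
  ring

theorem altCatalanSum_recurrence (t m : ℕ) :
    (2 * t + 1) * (t + 2 * m + 3) * altCatalanSum (2 * m + 2) t
      = 2 * (2 * m + 1) * (2 * m + 3) * altCatalanSum (2 * m) (t + 1) := by
  set F := altCatalanTerm (2 * m + 2) t
  set G := fun j => zeilbergerCert t m j * F j
  have hstep : ∀ j ∈ range (2 * m + 3),
      2 * (m + 1) * (2 * (2 * m + 1) * (2 * m + 3) * altCatalanTerm (2 * m) (t + 1) j
        - (2 * t + 1) * (t + 2 * m + 3) * F j) = G (j + 1) - G j := by
    intro j hj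
    rcases Nat.lt_or_ge j (2 * m + 2) with hj' | hj'
    · exact altCatalanTerm_zeilberger_of_add_eq (k := 2 * m + 1 - j) (by omega)
    · obtain rfl : j = 2 * m + 2 := by rw [mem_range] at hj; omega
      simp only [G, altCatalanTerm_eq_zero (t + 1) (show 2 * m < 2 * m + 2 by omega),
        F, altCatalanTerm_eq_zero t (show 2 * m + 2 < 2 * m + 2 + 1 by omega), zeilbergerCert]
      push_cast
      ring
  have htelescope : ∑ j ∈ range (2 * m + 3), (G (j + 1) - G j) = 0 := by
    rw [sum_range_sub G]
    simp [G, zeilbergerCert, F, altCatalanTerm_eq_zero t (show 2 * m + 2 < 2 * m + 3 by omega)]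
  rw [altCatalanSum_eq_sum_range t (show 2 * m + 2 < 2 * m + 3 by omega),
    altCatalanSum_eq_sum_range (t + 1) (show 2 * m < 2 * m + 3 by omega)]
  rw [← sum_congr rfl hstep, ← mul_sum, sum_sub_distrib, ← mul_sum, ← mul_sum] at htelescope
  have hm : (2 * (m + 1) : ℚ) ≠ 0 := by positivity
  linear_combination -((mul_eq_zero.1 htelescope).resolve_left hm)

theorem altCatalanClosedForm_recurrence (t m : ℕ) :
    (2 * t + 1) * (t + 2 * m + 3) * altCatalanClosedForm (m + 1) t
      = 2 * (2 * m + 1) * (2 * m + 3) * altCatalanClosedForm m (t + 1) := by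
  set N := t + 2 * m + 2
  have hN : ((N + 1).choose t : ℚ)
      = (t + 2 * m + 3) * (t + 1) * N.choose (t + 1) / ((2 * m + 3) * (2 * m + 2)) := by
    rw [eq_div_iff (by positivity)]
    have h₁ := cast_choose_mul_succ N t
    have h₂ := cast_choose_succ_right_mul N t
    simp only [N] at h₁ h₂ ⊢
    push_cast at h₁ h₂ ⊢
    linear_combination (-(2 * m + 2 : ℚ)) * h₁ - (t + 2 * m + 3 : ℚ) * h₂
  have hpos : (0 : ℚ) < N.choose (t + 1) := by exact_mod_cast Nat.choose_pos (by omega)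
  simp only [altCatalanClosedForm]
  rw [show t + 2 * (m + 1) + 1 = N + 1 by omega, show t + 1 + 2 * m + 1 = N by omega,
    show 2 * (m + 1) = 2 * m + 2 by ring, show 2 * (t + 1) = 2 * t + 2 by ring,
    show t + 1 + m = t + (m + 1) by ring, hN, cast_choose_two_mul_succ, cast_choose_two_mul_succ]
  field_simp

theorem altCatalanSum_eq_closedForm (m t : ℕ) :
    altCatalanSum (2 * m) t = altCatalanClosedForm m t := by
  induction m generalizing t with
  | zero =>
    have h : ((t + 1 : ℕ) : ℚ) * catalan t = (2 * t).choose t := by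
      exact_mod_cast succ_mul_catalan_eq_centralBinom t
    simp only [altCatalanSum, altCatalanTerm, altCatalanClosedForm, mul_zero, zero_add, range_one,
      zero_tsub, add_zero, sum_singleton, pow_zero, Nat.choose_self, Nat.cast_one, mul_one, one_mul,
      ← h, Nat.cast_add, Nat.choose_succ_self_right]
    field_simp
  | succ m ih =>
    apply mul_left_cancel₀ (show (2 * t + 1 : ℚ) * (t + 2 * m + 3) ≠ 0 by positivity)
    rw [show 2 * (m + 1) = 2 * m + 2 by ring, altCatalanSum_recurrence,
      altCatalanClosedForm_recurrence, ih]

/-- Eq. (9) of the paper. -/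
theorem alternating_catalan_shifted (n t : ℕ) (ht : t ≤ n) :
    ∑ k ∈ Finset.Icc t (2 * n - t),
        (-1 : ℚ) ^ k * ((2 * n - 2 * t).choose (k - t) : ℚ) * (catalan k : ℚ) *
          (catalan (2 * n - k) : ℚ)
      = (-1 : ℚ) ^ t * (catalan n : ℚ) * ((2 * t).choose t : ℚ) *
          ((2 * n - 2 * t).choose (n - t) : ℚ) / ((2 * n + 1 - t).choose t : ℚ) := by
  obtain ⟨m, rfl⟩ : ∃ m, n = t + m := ⟨n - t, by omega⟩
  have hsum : ∑ k ∈ Icc t (2 * (t + m) - t),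
        (-1 : ℚ) ^ k * ((2 * (t + m) - 2 * t).choose (k - t) : ℚ) * (catalan k : ℚ) *
          (catalan (2 * (t + m) - k) : ℚ)
      = (-1) ^ t * altCatalanSum (2 * m) t := by
    rw [← Ico_add_one_right_eq_Icc, sum_Ico_eq_sum_range, altCatalanSum, mul_sum,
      show 2 * (t + m) - t + 1 - t = 2 * m + 1 by omega]
    refine sum_congr rfl fun j hj => ?_
    have hjm : j ≤ 2 * m := Nat.lt_succ_iff.mp (mem_range.mp hj)
    rw [altCatalanTerm, show 2 * (t + m) - 2 * t = 2 * m by omega, Nat.add_sub_cancel_left,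
      show 2 * (t + m) - (t + j) = t + (2 * m - j) by omega, pow_add]
    ring
  rw [hsum, altCatalanSum_eq_closedForm, altCatalanClosedForm, mul_div_assoc',
    show 2 * (t + m) - 2 * t = 2 * m by omega, Nat.add_sub_cancel_left,
    show 2 * (t + m) + 1 - t = t + 2 * m + 1 by omega]
  ring
end
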